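/- arXiv:2503.14794 — 2 statements merged into one kernel-verified Lean document; each statement's English description precedes it below -/
import Mathlib

section
/- For every v ∈ (1/4+(1/2)ℤ≥0)ⁿ₊, one has |v_{1/4}(p_{1/4}(v))| ≤ |v|. -/
/-!
Both norms are sums over the levels `(2k+1)/4`, each squared level weighted by its multiplicity:
`|v|² = ∑ₖ m_v((2k+1)/4) ((2k+1)/4)²` and `|v_{1/4}(p)|² = ∑ₖ pₖ ((2k+1)/4)²`. On a long enough
range of levels, `p = p_{1/4}(v)` is a rearrangement of the multiplicity sequence of `v`: the
nonzero values occur equally often by definition, hence so does `0`. Since `p` is decreasing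
and the squared levels increase, the rearrangement inequality gives the claim.
-/

open Finset

/-- A partition of `N`: an antitone function `ℕ → ℕ` (the 0-indexed parts, padded with
zeros) supported on `{0, …, N-1}` whose parts sum to `N`. -/
def IsPartition (N : ℕ) (p : ℕ → ℕ) : Prop :=
  Antitone p ∧ (∀ i, N ≤ i → p i = 0) ∧ ∑ i ∈ Finset.range N, p i = N

/-- Dominance order: `Dominates p q` means `q ≤ p`, i.e. every partial sum of the parts
of `q` is at most the corresponding partial sum of the parts of `p`. -/
def Dominates (p q : ℕ → ℕ) : Prop :=
  ∀ j, ∑ i ∈ Finset.range j, q i ≤ ∑ i ∈ Finset.range j, p i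

/-- Multiplicity of the value `k` among the first `N` parts of `p`. -/
def mult (N : ℕ) (p : ℕ → ℕ) (k : ℕ) : ℕ :=
  ((Finset.range N).filter (fun i => p i = k)).card

/-- Multiplicity of the real value `s` among the entries of the tuple `v`. -/
noncomputable def multR {n : ℕ} (v : Fin n → ℝ) (s : ℝ) : ℕ :=
  {i : Fin n | v i = s}.ncard

/-- Euclidean norm of a real tuple. -/
noncomputable def enormR {n : ℕ} (v : Fin n → ℝ) : ℝ :=
  Real.sqrt (∑ i, (v i) ^ 2)

/-- `IsVQuarter n p w` says that the weakly decreasing tuple `w : Fin n → ℝ` is the tuple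
having `ν_k = p (k-1)` entries equal to `(2k-1)/4` for each `k ≥ 1`, where
`p = [ν₁, ν₂, …]` is a partition of `n`. -/
def IsVQuarter (n : ℕ) (p : ℕ → ℕ) (w : Fin n → ℝ) : Prop :=
  Antitone w ∧ (∀ i, ∃ k : ℕ, 1 ≤ k ∧ w i = (2 * (k : ℝ) - 1) / 4) ∧
  ∀ k : ℕ, 1 ≤ k → multR w ((2 * (k : ℝ) - 1) / 4) = p (k - 1)

/-- `IsPQuarter n v q` says that the partition `q` of `n` is the weakly decreasing
rearrangement of the multiplicity sequence `[m_v(1/4), m_v(3/4), m_v(5/4), …]`. -/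
def IsPQuarter (n : ℕ) (v : Fin n → ℝ) (q : ℕ → ℕ) : Prop :=
  IsPartition n q ∧
  ∀ c : ℕ, 1 ≤ c →
    mult n q c = {k : ℕ | 1 ≤ k ∧ multR v ((2 * (k : ℝ) - 1) / 4) = c}.ncard

/-- The 0-indexed level `(2k+1)/4`; the definitions above write the same level 1-indexed as
`(2k-1)/4`. -/
noncomputable def oddQuarter (k : ℕ) : ℝ := (2 * k + 1) / 4

lemma oddQuarter_strictMono : StrictMono oddQuarter := fun a b hab => by
  unfold oddQuarter
  gcongr

lemma oddQuarter_nonneg (k : ℕ) : 0 ≤ oddQuarter k := by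
  unfold oddQuarter
  positivity

lemma oddQuarter_eq (k : ℕ) : oddQuarter k = (2 * ((k + 1 : ℕ) : ℝ) - 1) / 4 := by
  unfold oddQuarter
  push_cast
  ring

lemma exists_oddQuarter_eq {y : ℝ} (h : ∃ k : ℕ, 1 ≤ k ∧ y = (2 * (k : ℝ) - 1) / 4) :
    ∃ k, y = oddQuarter k := by
  obtain ⟨k, hk, rfl⟩ := h
  exact ⟨k - 1, by rw [oddQuarter_eq, Nat.sub_add_cancel hk]⟩

section Multiplicity

variable {n : ℕ} {u : Fin n → ℝ}

lemma multR_eq_card (s : ℝ) : multR u s = #{i | u i = s} := by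
  rw [multR, ← Set.ncard_coe_finset, coe_filter_univ]

lemma multR_pos {i : Fin n} {s : ℝ} (h : u i = s) : 0 < multR u s :=
  (Set.ncard_pos (Set.toFinite _)).mpr ⟨i, h⟩

variable {x : ℕ → ℝ} {K : ℕ}

lemma multR_eq_zero_of_le (hx : Function.Injective x) (hu : ∀ i, ∃ k < K, u i = x k) {k : ℕ}
    (hk : K ≤ k) : multR u (x k) = 0 := by
  refine (Set.ncard_eq_zero (Set.toFinite _)).mpr (Set.eq_empty_of_forall_notMem fun i hi => ?_)
  obtain ⟨j, hj, hij⟩ := hu i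
  have : j = k := hx (hij.symm.trans hi)
  omega

lemma sum_eq_sum_range_multR_mul (hx : Function.Injective x) (hu : ∀ i, ∃ k < K, u i = x k)
    (φ : ℝ → ℝ) : ∑ i, φ (u i) = ∑ k ∈ range K, multR u (x k) * φ (x k) := by
  choose κ hκK hκ using hu
  rw [← sum_fiberwise_of_maps_to (g := κ) (t := range K) fun i _ => mem_range.2 (hκK i)]
  refine sum_congr rfl fun k _ => ?_
  have hfiber : univ.filter (fun i => κ i = k) = univ.filter (fun i => u i = x k) := by
    ext i
    simp only [mem_filter, mem_univ, true_and, hκ i, hx.eq_iff]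
  rw [hfiber, multR_eq_card, sum_congr rfl fun i hi => by rw [(mem_filter.1 hi).2],
    sum_const, nsmul_eq_mul]

end Multiplicity

section Rearrangement

variable {ι β : Type*} [DecidableEq β] {s : Finset ι}

lemma card_filter_eq_of_forall_ne {f g : ι → β} (b : β)
    (h : ∀ c ≠ b, #{x ∈ s | f x = c} = #{x ∈ s | g x = c}) (c : β) :
    #{x ∈ s | f x = c} = #{x ∈ s | g x = c} := by
  obtain hc | rfl := ne_or_eq c b
  · exact h c hc
  set t := insert c (s.image f ∪ s.image g)
  have hsplit : ∀ φ : ι → β, (∀ x ∈ s, φ x ∈ t) →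
      #{x ∈ s | φ x = c} + ∑ d ∈ t.erase c, #{x ∈ s | φ x = d} = #s := fun φ hφ => by
    rw [add_sum_erase t (fun d => #{x ∈ s | φ x = d}) (mem_insert_self _ _),
      card_eq_sum_card_fiberwise hφ]
  have hf := hsplit f fun x hx => mem_insert_of_mem (mem_union_left _ (mem_image_of_mem f hx))
  have hg := hsplit g fun x hx => mem_insert_of_mem (mem_union_right _ (mem_image_of_mem g hx))
  rw [sum_congr rfl fun d hd => h d (ne_of_mem_erase hd)] at hf
  omega

lemma exists_perm_comp_eq_of_card_fiber_eq {f g : ι → β}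
    (h : ∀ c, #{x ∈ s | f x = c} = #{x ∈ s | g x = c}) :
    ∃ σ : Equiv.Perm ι, {x | σ x ≠ x} ⊆ s ∧ ∀ x ∈ s, g (σ x) = f x := by
  classical
  have hcard : ∀ c, Fintype.card {x : s // f x = c} = Fintype.card {x : s // g x = c} := by
    intro c
    rw [Fintype.card_subtype, Fintype.card_subtype, univ_eq_attach, filter_attach (f · = c),
      filter_attach (g · = c), card_map, card_map, card_attach, card_attach, h]
  let τ : Equiv.Perm s := Equiv.ofFiberEquiv fun c => Fintype.equivOfCardEq (hcard c)
  refine ⟨Equiv.Perm.ofSubtype τ, fun x hx => ?_, fun x hx => ?_⟩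
  · by_contra hxs
    exact hx (Equiv.Perm.ofSubtype_apply_of_not_mem τ hxs)
  · rw [Equiv.Perm.ofSubtype_apply_of_mem τ hx]
    exact Equiv.ofFiberEquiv_map (f := fun y : s => f y) (g := fun y : s => g y) _ ⟨x, hx⟩

lemma sum_mul_le_sum_mul_of_card_fiber_eq {f g : ι → ℕ} {a : ι → ℝ} (hga : Antivary g a)
    (h : ∀ d, #{x ∈ s | f x = d} = #{x ∈ s | g x = d}) :
    ∑ x ∈ s, (g x : ℝ) * a x ≤ ∑ x ∈ s, (f x : ℝ) * a x := by
  obtain ⟨σ, hσ, hgσ⟩ := exists_perm_comp_eq_of_card_fiber_eq h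
  have hcast : Antivary (fun x => (g x : ℝ)) a := fun i j hij => Nat.cast_le.mpr (hga hij)
  calc ∑ x ∈ s, (g x : ℝ) * a x ≤ ∑ x ∈ s, (g (σ x) : ℝ) * a x :=
        (hcast.antivaryOn _).sum_mul_le_sum_comp_perm_mul hσ
    _ = ∑ x ∈ s, (f x : ℝ) * a x := sum_congr rfl fun x hx => by rw [hgσ x hx]

end Rearrangement

lemma ncard_setOf_eq_card_filter_range {f : ℕ → ℕ} {K d : ℕ} (hf : ∀ k, K ≤ k → f k = 0)
    (hd : d ≠ 0) : {k | f k = d}.ncard = #{k ∈ range K | f k = d} := by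
  rw [← Set.ncard_coe_finset, coe_filter]
  congr 1
  ext k
  simp only [Set.mem_ofPred_eq, mem_range, iff_and_self]
  intro hk
  by_contra hK
  exact hd (hk ▸ hf k (not_lt.mp hK))

lemma IsPartition.card_filter_range_eq_mult {n K d : ℕ} {q : ℕ → ℕ} (hq : IsPartition n q)
    (hK : n ≤ K) (hd : d ≠ 0) : #{k ∈ range K | q k = d} = mult n q d := by
  rw [mult, ← ncard_setOf_eq_card_filter_range hq.2.1 hd,
    ← ncard_setOf_eq_card_filter_range (fun k hk => hq.2.1 k (hK.trans hk)) hd]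

lemma IsPQuarter.mult_eq {n d : ℕ} {v : Fin n → ℝ} {q : ℕ → ℕ} (hq : IsPQuarter n v q)
    (hd : d ≠ 0) : mult n q d = {k | multR v (oddQuarter k) = d}.ncard := by
  rw [hq.2 d (Nat.one_le_iff_ne_zero.mpr hd),
    ← Set.ncard_image_of_injective {k | multR v (oddQuarter k) = d} Nat.succ_injective]
  congr 1
  ext k
  rcases k with _ | k <;> simp [oddQuarter_eq]

lemma IsVQuarter.multR_oddQuarter {n : ℕ} {q : ℕ → ℕ} {w : Fin n → ℝ} (hw : IsVQuarter n q w)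
    (k : ℕ) : multR w (oddQuarter k) = q k := by
  rw [oddQuarter_eq, hw.2.2 (k + 1) k.succ_pos, Nat.add_sub_cancel]

lemma IsVQuarter.exists_lt {n : ℕ} {q : ℕ → ℕ} {w : Fin n → ℝ} (hq : IsPartition n q)
    (hw : IsVQuarter n q w) (i : Fin n) : ∃ k < n, w i = oddQuarter k := by
  obtain ⟨k, hk⟩ := exists_oddQuarter_eq (hw.2.1 i)
  refine ⟨k, not_le.mp fun hnk => ?_, hk⟩
  have := multR_pos hk
  rw [hw.multR_oddQuarter, hq.2.1 k hnk] at this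
  exact this.false

theorem statement14_general (n : ℕ)
    (v : Fin n → ℝ)
    (hvmem : ∀ i, ∃ k : ℕ, 1 ≤ k ∧ v i = (2 * (k : ℝ) - 1) / 4)
    (q : ℕ → ℕ) (hq : IsPQuarter n v q)
    (w : Fin n → ℝ) (hw : IsVQuarter n q w) :
    enormR w ≤ enormR v := by
  choose κ hκ using fun i => exists_oddQuarter_eq (hvmem i)
  set K := max n (univ.sup κ + 1)
  have hvK : ∀ i, ∃ k < K, v i = oddQuarter k := fun i =>
    ⟨κ i, lt_max_of_lt_right (Nat.lt_succ_of_le (le_sup (mem_univ i))), hκ i⟩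
  have hwK : ∀ i, ∃ k < K, w i = oddQuarter k := fun i => by
    obtain ⟨k, hk, hwk⟩ := hw.exists_lt hq.1 i
    exact ⟨k, lt_max_of_lt_left hk, hwk⟩
  have hfiber : ∀ d, #{k ∈ range K | multR v (oddQuarter k) = d} = #{k ∈ range K | q k = d} :=
    card_filter_eq_of_forall_ne 0 fun d hd => by
      rw [hq.1.card_filter_range_eq_mult (le_max_left _ _) hd, hq.mult_eq hd,
        ncard_setOf_eq_card_filter_range
          (fun k hk => multR_eq_zero_of_le oddQuarter_strictMono.injective hvK hk) hd]
  have hanti : Antivary q (fun k => oddQuarter k ^ 2) :=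
    hq.1.1.antivary fun i j hij =>
      pow_le_pow_left₀ (oddQuarter_nonneg i) (oddQuarter_strictMono.monotone hij) 2
  refine Real.sqrt_le_sqrt ?_
  rw [sum_eq_sum_range_multR_mul oddQuarter_strictMono.injective hvK (· ^ 2),
    sum_eq_sum_range_multR_mul oddQuarter_strictMono.injective hwK (· ^ 2)]
  simp only [hw.multR_oddQuarter]
  exact sum_mul_le_sum_mul_of_card_fiber_eq hanti hfiber

/-- For every `v ∈ (1/4+(1/2)ℤ≥0)ⁿ₊` (weakly decreasing,
with all entries of the form `(2k-1)/4` for `k ≥ 1`), one has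
`|v_{1/4}(p_{1/4}(v))| ≤ |v|`. -/
theorem statement14 (n : ℕ) (hn : 1 ≤ n)
    (v : Fin n → ℝ) (hv : Antitone v)
    (hvmem : ∀ i, ∃ k : ℕ, 1 ≤ k ∧ v i = (2 * (k : ℝ) - 1) / 4)
    (q : ℕ → ℕ) (hq : IsPQuarter n v q)
    (w : Fin n → ℝ) (hw : IsVQuarter n q w) :
    enormR w ≤ enormR v :=
  statement14_general n v hvmem q hq w hw
end

section
/- Let q be the transpose of a partition in 𝒫**(2n), and let r = q_C be its C-collapse. Then the sequence r̃ equals q. In other words, the operation r ↦ r̃ is a left inverse to the C-collapse map on the set of transposes of partitions in 𝒫**(2n). -/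
open Finset

/-- Multiplicity of the value `k` among the entries of a tuple of naturals. -/
def multN {n : ℕ} (v : Fin n → ℕ) (k : ℕ) : ℕ :=
  (Finset.univ.filter (fun i => v i = k)).card

/-- Euclidean norm of a tuple of naturals. -/
noncomputable def enormN {n : ℕ} (v : Fin n → ℕ) : ℝ :=
  Real.sqrt (∑ i, ((v i : ℝ)) ^ 2)

/-- `IsPStar n p μ₀ μ` says that `p ∈ 𝒫*(2n)` with decomposition data `(μ₀; μ₁, μ₂, …)`:
`p` is a partition of `2n` whose multiset of parts is the union of the doubled partition
`[μ₁, μ₁, μ₂, μ₂, …]` and a single even part `2μ₀` (omitted if `μ₀ = 0`).  Equivalently,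
for each `k ≥ 1` the multiplicity of `k` in `p` equals twice its multiplicity in `μ`, plus
one if `k = 2μ₀`. -/
def IsPStar (n : ℕ) (p : ℕ → ℕ) (μ₀ : ℕ) (μ : ℕ → ℕ) : Prop :=
  IsPartition (2 * n) p ∧ Antitone μ ∧ (∀ i, n ≤ i → μ i = 0) ∧
  ∀ k, 1 ≤ k → mult (2 * n) p k = 2 * mult n μ k + (if k = 2 * μ₀ then 1 else 0)

/-- The transpose of a partition (with parts supported on `{0, …, N-1}`):
`(pᵗ)_j = #{i : p_i ≥ j+1}` (0-indexed). -/
def transposeP (N : ℕ) (p : ℕ → ℕ) (j : ℕ) : ℕ :=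
  ((Finset.range N).filter (fun i => j + 1 ≤ p i)).card

/-- A partition (of `N`, with parts supported on `{0, …, N-1}`) is of type `C` if every odd
part occurs with even multiplicity. -/
def TypeC (N : ℕ) (p : ℕ → ℕ) : Prop :=
  ∀ k, Odd k → Even (mult N p k)

/-- `IsCCollapse N p r` says that `r = p_C` is the C-collapse of `p`: the greatest element,
in the dominance order, of the set of type `C` partitions of `N` that are `≤ p`. -/
def IsCCollapse (N : ℕ) (p r : ℕ → ℕ) : Prop :=
  IsPartition N r ∧ TypeC N r ∧ Dominates p r ∧
    ∀ r', IsPartition N r' → TypeC N r' → Dominates p r' → Dominates r r'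

/-- For a partition `r = [r₁, r₂, …]` (0-indexed here, so `r i` is the part `r_{i+1}`), the
sequence `r̃` is obtained by replacing each even (nonzero) part `r_{i+1}` by `r_{i+1} + 1`
if `i + 1` is odd and by `r_{i+1} - 1` if `i + 1` is even, leaving odd parts unchanged. -/
def tildeSeq (r : ℕ → ℕ) (i : ℕ) : ℕ :=
  if r i = 0 then 0
  else if Even (r i) then (if Even i then r i + 1 else r i - 1) else r i

/-!
Every part of `p` other than its largest part `2μ₀` has even multiplicity, so `q = pᵗ` has
exactly `2μ₀` nonzero parts and all of them are odd. For such `q` the C-collapse is explicit: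
in each pair `(q_{2k}, q_{2k+1})` of distinct parts move one box from the first part to the
second. The result is of type `C`, and it dominates every type `C` partition `r ≤ q`: the
partial sums of `q` at odd positions are odd, while a type `C` partition has even partial sums
wherever it drops, so `r` cannot match `q` at position `2k+1` when `q_{2k} ≠ q_{2k+1}`.
The operation `r ↦ r̃` undoes exactly these box moves.
-/

lemma sum_range_two_mul_eq_sum_pairs {M : Type*} [AddCommMonoid M] (f : ℕ → M) (K : ℕ) :
    ∑ i ∈ range (2 * K), f i = ∑ j ∈ range K, (f (2 * j) + f (2 * j + 1)) := by
  induction K with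
  | zero => simp
  | succ K ih => rw [Nat.mul_succ, sum_range_succ, sum_range_succ, sum_range_succ, ih, add_assoc]

lemma Dominates.antisymm {p q : ℕ → ℕ} (hpq : Dominates p q) (hqp : Dominates q p) : p = q := by
  funext i
  have h := le_antisymm (hqp i) (hpq i)
  have h' := le_antisymm (hqp (i + 1)) (hpq (i + 1))
  rw [sum_range_succ, sum_range_succ] at h'
  omega

lemma IsCCollapse.unique {N : ℕ} {p r r' : ℕ → ℕ} (hr : IsCCollapse N p r)
    (hr' : IsCCollapse N p r') : r = r' :=
  (hr.2.2.2 r' hr'.1 hr'.2.1 hr'.2.2.1).antisymm (hr'.2.2.2 r hr.1 hr.2.1 hr.2.2.1)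

lemma IsPartition.le {N : ℕ} {p : ℕ → ℕ} (hp : IsPartition N p) (i : ℕ) : p i ≤ N := by
  by_cases hi : i < N
  · calc p i ≤ ∑ j ∈ range N, p j := single_le_sum (fun j _ => Nat.zero_le _) (mem_range.mpr hi)
      _ = N := hp.2.2
  · simp [hp.2.1 i (by omega)]

/-- Above a drop, each odd part of a type `C` partition occurs with its full, even,
multiplicity. -/
lemma TypeC.even_sum_range_of_lt {N : ℕ} {r : ℕ → ℕ} (hr : IsPartition N r) (hC : TypeC N r)
    {j : ℕ} (hdrop : r (j + 1) < r j) : Even (∑ i ∈ range (j + 1), r i) := by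
  rw [show ∑ i ∈ range (j + 1), r i = _ from sum_comp (fun v => v) r]
  refine even_sum _ fun v hv => ?_
  obtain ⟨i, hi, rfl⟩ := mem_image.mp hv
  have hfiber : {x ∈ range (j + 1) | r x = r i} = {x ∈ range N | r x = r i} := by
    have hrj : r (j + 1) < r i := hdrop.trans_le (hr.1 (by simpa [Nat.lt_succ_iff] using hi))
    ext x
    simp only [mem_filter, mem_range]
    constructor
    · rintro ⟨hx, hxi⟩
      refine ⟨?_, hxi⟩
      by_contra! hNx
      rw [hr.2.1 x hNx] at hxi
      omega
    · rintro ⟨-, hxi⟩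
      refine ⟨?_, hxi⟩
      by_contra! hx
      have := hr.1 hx
      omega
  rw [hfiber, smul_eq_mul]
  rcases Nat.even_or_odd (r i) with hev | hodd
  · exact hev.mul_left _
  · exact (hC _ hodd).mul_right _

section Transpose

variable {N : ℕ} {p : ℕ → ℕ}

lemma transposeP_antitone : Antitone (transposeP N p) :=
  fun _ _ hjj' => card_le_card <| monotone_filter_right _ fun _ hi => by omega

lemma transposeP_eq_zero {M j : ℕ} (hM : ∀ i, p i ≤ M) (hj : M ≤ j) : transposeP N p j = 0 := by
  rw [transposeP, card_eq_zero, filter_eq_empty_iff]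
  intro i _
  have := hM i
  omega

lemma transposeP_eq_sum_mult {M : ℕ} (hM : ∀ i, p i ≤ M) (j : ℕ) :
    transposeP N p j = ∑ k ∈ Icc (j + 1) M, mult N p k := by
  rw [transposeP, card_eq_sum_card_fiberwise (f := p) fun i hi => ?_]
  · refine sum_congr rfl fun k hk => ?_
    rw [filter_filter, mult]
    congr 1
    refine filter_congr fun i _ => ?_
    simp only [mem_Icc] at hk
    constructor
    · exact And.right
    · rintro rfl; exact ⟨hk.1, rfl⟩
  · simp only [coe_filter, Set.mem_ofPred_eq] at hi
    simp [hi.2, hM i]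

lemma sum_transposeP (hp : IsPartition N p) : ∑ j ∈ range N, transposeP N p j = N := by
  have hcols : ∀ i ∈ range N, #{j ∈ range N | j + 1 ≤ p i} = p i := fun i _ => by
    have := hp.le i
    rw [show {j ∈ range N | j + 1 ≤ p i} = range (p i) by
      ext j; simp only [mem_filter, mem_range]; omega, card_range]
  exact (sum_card_bipartiteAbove_eq_sum_card_bipartiteBelow (fun j i => j + 1 ≤ p i)).trans
    ((sum_congr rfl hcols).trans hp.2.2)

lemma IsPartition.transposeP (hp : IsPartition N p) : IsPartition N (transposeP N p) :=
  ⟨transposeP_antitone, fun _ => transposeP_eq_zero hp.le, sum_transposeP hp⟩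

end Transpose

structure EvenlyManyOddParts (m : ℕ) (q : ℕ → ℕ) : Prop where
  even : Even m
  antitone : Antitone q
  odd : ∀ i < m, Odd (q i)
  eq_zero : ∀ i, m ≤ i → q i = 0

/-- `2 * (i / 2)` is the first index of the pair of parts containing `i`. -/
def pairCollapse (q : ℕ → ℕ) (i : ℕ) : ℕ :=
  if q (2 * (i / 2)) = q (2 * (i / 2) + 1) then q i else if Even i then q i - 1 else q i + 1

lemma pairCollapse_two_mul (q : ℕ → ℕ) (k : ℕ) :
    pairCollapse q (2 * k) = if q (2 * k) = q (2 * k + 1) then q (2 * k) else q (2 * k) - 1 := by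
  simp [pairCollapse]

lemma pairCollapse_two_mul_add_one (q : ℕ → ℕ) (k : ℕ) :
    pairCollapse q (2 * k + 1) =
      if q (2 * k) = q (2 * k + 1) then q (2 * k + 1) else q (2 * k + 1) + 1 := by
  simp [pairCollapse, show (2 * k + 1) / 2 = k by omega]

lemma pairCollapse_two_mul_le (q : ℕ → ℕ) (k : ℕ) : pairCollapse q (2 * k) ≤ q (2 * k) := by
  rw [pairCollapse_two_mul]
  split_ifs <;> omega

lemma le_pairCollapse_two_mul_add_one (q : ℕ → ℕ) (k : ℕ) :
    q (2 * k + 1) ≤ pairCollapse q (2 * k + 1) := by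
  rw [pairCollapse_two_mul_add_one]
  split_ifs <;> omega

lemma pairCollapse_eq_zero {N : ℕ} {q : ℕ → ℕ} (hN : Even N) (hq : ∀ i, N ≤ i → q i = 0)
    {i : ℕ} (hi : N ≤ i) : pairCollapse q i = 0 := by
  obtain ⟨a, rfl⟩ := hN
  obtain ⟨k, rfl | rfl⟩ := Nat.even_or_odd' i <;>
  simp [pairCollapse_two_mul, pairCollapse_two_mul_add_one, hq (2 * k) (by omega),
    hq (2 * k + 1) (by omega)]

lemma tildeSeq_of_eq_zero_or_odd {r : ℕ → ℕ} {i : ℕ} (h : r i = 0 ∨ Odd (r i)) :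
    tildeSeq r i = r i := by
  rcases h with h | h
  · simp [tildeSeq, h]
  · simp [tildeSeq, Nat.not_even_iff_odd.mpr h, h.pos.ne']

namespace EvenlyManyOddParts

variable {m : ℕ} {q : ℕ → ℕ} (hq : EvenlyManyOddParts m q)
include hq

lemma lt_of_pos {i : ℕ} (hi : 0 < q i) : i < m := by
  by_contra! h
  rw [hq.eq_zero i h] at hi
  exact hi.false

lemma eq_zero_or_odd (i : ℕ) : q i = 0 ∨ Odd (q i) :=
  (lt_or_ge i m).elim (fun h => .inr (hq.odd i h)) (fun h => .inl (hq.eq_zero i h))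

lemma odd_of_ne {k : ℕ} (hne : q (2 * k) ≠ q (2 * k + 1)) :
    Odd (q (2 * k)) ∧ Odd (q (2 * k + 1)) := by
  have hlt : q (2 * k + 1) < q (2 * k) := (hq.antitone (by omega)).lt_of_ne' hne
  have hkm : 2 * k < m := hq.lt_of_pos (by omega)
  obtain ⟨a, ha⟩ := hq.even
  exact ⟨hq.odd _ hkm, hq.odd _ (by omega)⟩

lemma add_two_le_of_ne {k : ℕ} (hne : q (2 * k) ≠ q (2 * k + 1)) :
    q (2 * k + 1) + 2 ≤ q (2 * k) := by
  obtain ⟨⟨a, ha⟩, ⟨b, hb⟩⟩ := hq.odd_of_ne hne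
  have := hq.antitone (show 2 * k ≤ 2 * k + 1 by omega)
  omega

lemma odd_sum_range {j : ℕ} (hj : Odd j) (hjm : j ≤ m) : Odd (∑ i ∈ range j, q i) := by
  rw [odd_sum_iff_odd_card_odd,
    filter_true_of_mem fun i hi => hq.odd i (by rw [mem_range] at hi; omega), card_range]
  exact hj

lemma pairCollapse_add (k : ℕ) :
    pairCollapse q (2 * k) + pairCollapse q (2 * k + 1) = q (2 * k) + q (2 * k + 1) := by
  rw [pairCollapse_two_mul, pairCollapse_two_mul_add_one]
  split_ifs with h
  · rfl
  · have := hq.add_two_le_of_ne h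
    omega

lemma sum_range_two_mul_pairCollapse (K : ℕ) :
    ∑ i ∈ range (2 * K), pairCollapse q i = ∑ i ∈ range (2 * K), q i := by
  simp only [sum_range_two_mul_eq_sum_pairs, hq.pairCollapse_add]

lemma pairCollapse_antitone : Antitone (pairCollapse q) := by
  refine antitone_nat_of_succ_le fun i => ?_
  obtain ⟨k, rfl | rfl⟩ := Nat.even_or_odd' i
  · rw [pairCollapse_two_mul, pairCollapse_two_mul_add_one]
    split_ifs with h
    · exact hq.antitone (by omega)
    · have := hq.add_two_le_of_ne h
      omega
  · rw [show 2 * k + 1 + 1 = 2 * (k + 1) by ring]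
    calc pairCollapse q (2 * (k + 1)) ≤ q (2 * (k + 1)) := pairCollapse_two_mul_le q (k + 1)
      _ ≤ q (2 * k + 1) := hq.antitone (by omega)
      _ ≤ pairCollapse q (2 * k + 1) := le_pairCollapse_two_mul_add_one q k

lemma pairCollapse_two_mul_eq_iff {k v : ℕ} (hv : Odd v) :
    pairCollapse q (2 * k) = v ↔ pairCollapse q (2 * k + 1) = v := by
  rw [pairCollapse_two_mul, pairCollapse_two_mul_add_one]
  split_ifs with h
  · rw [h]
  · obtain ⟨⟨a, ha⟩, ⟨b, hb⟩⟩ := hq.odd_of_ne h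
    obtain ⟨c, hc⟩ := hv
    constructor <;> intro <;> omega

lemma isPartition_pairCollapse {N : ℕ} (hN : Even N) (hqN : IsPartition N q) :
    IsPartition N (pairCollapse q) := by
  refine ⟨hq.pairCollapse_antitone, fun i hi => pairCollapse_eq_zero hN hqN.2.1 hi, ?_⟩
  obtain ⟨K, rfl⟩ := hN.two_dvd
  rw [hq.sum_range_two_mul_pairCollapse, hqN.2.2]

lemma typeC_pairCollapse {N : ℕ} (hN : Even N) : TypeC N (pairCollapse q) := by
  intro v hv
  obtain ⟨K, rfl⟩ := hN.two_dvd
  rw [mult, card_filter, sum_range_two_mul_eq_sum_pairs]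
  refine even_sum _ fun k _ => ?_
  simp only [hq.pairCollapse_two_mul_eq_iff hv]
  exact Even.add_self _

lemma dominates_pairCollapse : Dominates q (pairCollapse q) := by
  intro j
  obtain ⟨k, rfl | rfl⟩ := Nat.even_or_odd' j
  · exact (hq.sum_range_two_mul_pairCollapse k).le
  · rw [sum_range_succ, sum_range_succ, hq.sum_range_two_mul_pairCollapse]
    exact Nat.add_le_add_left (pairCollapse_two_mul_le q k) _

lemma dominates_of_typeC {N : ℕ} {r : ℕ → ℕ} (hr : IsPartition N r) (hC : TypeC N r)
    (hqr : Dominates q r) : Dominates (pairCollapse q) r := by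
  intro j
  obtain ⟨k, rfl | rfl⟩ := Nat.even_or_odd' j
  · rw [hq.sum_range_two_mul_pairCollapse]
    exact hqr _
  rw [sum_range_succ (pairCollapse q), hq.sum_range_two_mul_pairCollapse, pairCollapse_two_mul]
  split_ifs with h
  · rw [← sum_range_succ]
    exact hqr _
  have hgap := hq.add_two_le_of_ne h
  have hprev := hqr (2 * k)
  have hcur := hqr (2 * k + 1)
  have hnext := hqr (2 * k + 2)
  simp only [sum_range_succ] at hcur hnext ⊢
  suffices hne : ∑ i ∈ range (2 * k + 1), r i ≠ ∑ i ∈ range (2 * k + 1), q i by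
    simp only [sum_range_succ] at hne
    omega
  intro heq
  have hdrop : r (2 * k + 1) < r (2 * k) := by
    simp only [sum_range_succ] at heq
    omega
  have hkm : 2 * k + 1 ≤ m := by
    obtain ⟨a, ha⟩ := hq.even
    have := hq.lt_of_pos (i := 2 * k) (by omega)
    omega
  have hodd := hq.odd_sum_range (odd_two_mul_add_one k) hkm
  rw [← heq, ← Nat.not_even_iff_odd] at hodd
  exact hodd (hC.even_sum_range_of_lt hr hdrop)

lemma isCCollapse_pairCollapse {N : ℕ} (hN : Even N) (hqN : IsPartition N q) :
    IsCCollapse N q (pairCollapse q) :=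
  ⟨hq.isPartition_pairCollapse hN hqN, hq.typeC_pairCollapse hN, hq.dominates_pairCollapse,
    fun _ hr hC hqr => hq.dominates_of_typeC hr hC hqr⟩

lemma tildeSeq_pairCollapse : tildeSeq (pairCollapse q) = q := by
  funext i
  obtain ⟨k, rfl | rfl⟩ := Nat.even_or_odd' i
  · by_cases h : q (2 * k) = q (2 * k + 1)
    · have hc : pairCollapse q (2 * k) = q (2 * k) := by rw [pairCollapse_two_mul, if_pos h]
      rw [tildeSeq_of_eq_zero_or_odd (hc ▸ hq.eq_zero_or_odd _), hc]
    · obtain ⟨⟨a, ha⟩, ⟨b, hb⟩⟩ := hq.odd_of_ne h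
      have hgap := hq.add_two_le_of_ne h
      rw [tildeSeq, pairCollapse_two_mul, if_neg h, if_neg (by omega),
        if_pos ⟨a, by omega⟩, if_pos (even_two_mul k)]
      omega
  · by_cases h : q (2 * k) = q (2 * k + 1)
    · have hc : pairCollapse q (2 * k + 1) = q (2 * k + 1) := by
        rw [pairCollapse_two_mul_add_one, if_pos h]
      rw [tildeSeq_of_eq_zero_or_odd (hc ▸ hq.eq_zero_or_odd _), hc]
    · obtain ⟨-, b, hb⟩ := hq.odd_of_ne h
      rw [tildeSeq, pairCollapse_two_mul_add_one, if_neg h, if_neg (by omega),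
        if_pos ⟨b + 1, by omega⟩, if_neg (Nat.not_even_iff_odd.mpr (odd_two_mul_add_one k))]
      omega

end EvenlyManyOddParts

section PStar

variable {n μ₀ : ℕ} {p μ : ℕ → ℕ}

lemma IsPStar.le_two_mul (hp : IsPStar n p μ₀ μ) (hpss : μ 0 ≤ 2 * μ₀) (i : ℕ) :
    p i ≤ 2 * μ₀ := by
  by_contra! hi
  have hiN : i < 2 * n := by
    by_contra! hiN
    rw [hp.1.2.1 i hiN] at hi
    omega
  have hmult : 0 < mult (2 * n) p (p i) := card_pos.mpr ⟨i, by simp [hiN]⟩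
  rw [hp.2.2.2 _ (by omega), if_neg hi.ne'] at hmult
  obtain ⟨j, hj⟩ := card_pos.mp (show 0 < mult n μ (p i) by omega)
  rw [mem_filter] at hj
  have := hp.2.1 (Nat.zero_le j)
  omega

lemma IsPStar.evenlyManyOddParts_transposeP (hp : IsPStar n p μ₀ μ) (hpss : μ 0 ≤ 2 * μ₀) :
    EvenlyManyOddParts (2 * μ₀) (transposeP (2 * n) p) where
  even := even_two_mul μ₀
  antitone := transposeP_antitone
  odd j hj := by
    rw [transposeP_eq_sum_mult (hp.le_two_mul hpss),
      sum_congr rfl fun k hk => hp.2.2.2 k (by rw [mem_Icc] at hk; omega), sum_add_distrib,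
      sum_ite_eq', if_pos (by rw [mem_Icc]; omega), ← mul_sum]
    exact odd_two_mul_add_one _
  eq_zero _ hj := transposeP_eq_zero (hp.le_two_mul hpss) hj

end PStar

theorem statement16_general (n : ℕ)
    (p : ℕ → ℕ) (μ₀ : ℕ) (μ : ℕ → ℕ)
    (hp : IsPStar n p μ₀ μ) (hpss : μ 0 ≤ 2 * μ₀)
    (r : ℕ → ℕ) (hr : IsCCollapse (2 * n) (transposeP (2 * n) p) r) :
    tildeSeq r = transposeP (2 * n) p := by
  have hq := hp.evenlyManyOddParts_transposeP hpss
  rw [hr.unique (hq.isCCollapse_pairCollapse (even_two_mul n) hp.1.transposeP)]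
  exact hq.tildeSeq_pairCollapse

/-- Let `q = pᵗ` be the transpose of a partition `p ∈ 𝒫**(2n)` and let
`r = q_C` be its C-collapse.  Then `r̃ = q`; i.e., the operation `r ↦ r̃` is a left inverse
to the C-collapse map on the set of transposes of partitions in `𝒫**(2n)`. -/
theorem statement16 (n : ℕ) (hn : 1 ≤ n)
    (p : ℕ → ℕ) (μ₀ : ℕ) (μ : ℕ → ℕ)
    (hp : IsPStar n p μ₀ μ) (hpss : μ 0 ≤ 2 * μ₀)
    (r : ℕ → ℕ) (hr : IsCCollapse (2 * n) (transposeP (2 * n) p) r) :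
    tildeSeq r = transposeP (2 * n) p :=
  statement16_general n p μ₀ μ hp hpss r hr
end
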